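/- Suppose k ≤ f(k) ≤ k+1 for all 0 ≤ k ≤ K. Then for all 2 ≤ ℓ ≤ K+1 and all k ≤ ℓ-2, h(k+1,ℓ) - h(k,ℓ) ≥ 0; i.e., k ↦ h(k,ℓ) is nondecreasing on {0,...,ℓ-1}. -/

import Mathlib

/-!
Multiplying by `ℓ + 1`, one step of the chain gives the linear recursion
`(ℓ+1) Δh(k,ℓ+1) = (ℓ - f(k+1)) Δh(k,ℓ) + f(k) Δh(k-1,ℓ)`, where `Δh(k,ℓ) = h(k+1,ℓ) - h(k,ℓ)`
and `Δh(-1,ℓ)` is read as `h(0,ℓ) ≥ 0`. Induct on `ℓ` from the vacuous case `ℓ = 1`: the second term is nonnegative by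
induction, and so is the first, since either `k + 2 ≤ ℓ` and `f(k+1) ≤ k + 2 ≤ ℓ`, or `k + 1 = ℓ`,
where `h(ℓ,ℓ) = 0` turns it into `(f(ℓ) - ℓ) h(ℓ-1,ℓ)` with `f(ℓ) ≥ ℓ`.
-/

open Finset

/-- `ChainLaw f p` says that `p ℓ k = P(X_ℓ = k)` is the law of the Markov chain
`(X_ℓ)_{ℓ ≥ 1}` with `X_1 = 0` and time-inhomogeneous transitions: from state
`i` at time `n`, move to `i+1` with probability `f i/(n+1)`, return to `0` with
probability `1/(n+1)` if `i ≥ 1` (so that it stays at `i` with probability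
`(n - f i)/(n+1)`), and, from `i = 0`, move to `1` with probability `f 0/(n+1)`
and stay at `0` otherwise.  (The chain has total mass one, so the probability
of being at `0` at time `n+1` is
`p n 0 (n+1-f 0)/(n+1) + (∑_{i ≥ 1} p n i)/(n+1) = p n 0 (n+1-f 0)/(n+1) + (1 - p n 0)/(n+1)`.) -/
def ChainLaw (f : ℕ → ℝ) (p : ℕ → ℕ → ℝ) : Prop :=
  (∀ k, p 1 k = if k = 0 then 1 else 0) ∧
  (∀ n, 1 ≤ n →
    p (n + 1) 0 = p n 0 * (((n : ℝ) + 1 - f 0) / ((n : ℝ) + 1))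
      + (1 - p n 0) * (1 / ((n : ℝ) + 1))) ∧
  (∀ n, 1 ≤ n → ∀ j, 1 ≤ j →
    p (n + 1) j = p n (j - 1) * (f (j - 1) / ((n : ℝ) + 1))
      + p n j * (((n : ℝ) - f j) / ((n : ℝ) + 1)))

/-- `Hk f p k ℓ = f k P(X_ℓ = k) - P(X_ℓ ≥ k+1)`; since `X_ℓ ≤ ℓ - 1` a.s.,
`P(X_ℓ ≥ k+1) = ∑_{j=k+1}^{ℓ-1} p ℓ j`. -/
def Hk (f : ℕ → ℝ) (p : ℕ → ℕ → ℝ) (k ℓ : ℕ) : ℝ :=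
  f k * p ℓ k - ∑ j ∈ Finset.Ico (k + 1) ℓ, p ℓ j

namespace ChainLaw

variable {f : ℕ → ℝ} {p : ℕ → ℕ → ℝ}

theorem eq_zero_of_le (hp : ChainLaw f p) {n j : ℕ} (hn : 1 ≤ n) (hj : n ≤ j) : p n j = 0 := by
  induction n, hn using Nat.le_induction generalizing j with
  | base => rw [hp.1 j, if_neg (by omega)]
  | succ m hm ih =>
    rw [hp.2.2 m hm j (by omega), ih (by omega), ih (by omega)]
    ring

theorem mul_succ_zero (hp : ChainLaw f p) {n : ℕ} (hn : 1 ≤ n) :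
    ((n : ℝ) + 1) * p (n + 1) 0 = ((n : ℝ) - f 0) * p n 0 + 1 := by
  rw [hp.2.1 n hn]
  field_simp
  ring

theorem mul_succ_succ (hp : ChainLaw f p) {n : ℕ} (hn : 1 ≤ n) (j : ℕ) :
    ((n : ℝ) + 1) * p (n + 1) (j + 1) = f j * p n j + ((n : ℝ) - f (j + 1)) * p n (j + 1) := by
  rw [hp.2.2 n hn (j + 1) (by omega), Nat.add_sub_cancel]
  field_simp

theorem sum_Ico_eq_of_le (hp : ChainLaw f p) {n N : ℕ} (hn : 1 ≤ n) (hN : n ≤ N) (a : ℕ) :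
    ∑ j ∈ Ico a n, p n j = ∑ j ∈ Ico a N, p n j :=
  sum_subset (Ico_subset_Ico_right hN) fun j hj hj' =>
    hp.eq_zero_of_le hn (by simp only [mem_Ico] at hj hj'; omega)

theorem mul_tail_succ (hp : ChainLaw f p) {n k : ℕ} (hn : 1 ≤ n) (hk : k ≤ n) :
    ((n : ℝ) + 1) * ∑ j ∈ Ico (k + 1) (n + 1), p (n + 1) j
      = f k * p n k + n * ∑ j ∈ Ico (k + 1) (n + 1), p n j := by
  calc ((n : ℝ) + 1) * ∑ j ∈ Ico (k + 1) (n + 1), p (n + 1) j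
      = ∑ i ∈ Ico k n, (f i * p n i + ((n : ℝ) - f (i + 1)) * p n (i + 1)) := by
        rw [mul_sum, ← sum_Ico_add']
        exact sum_congr rfl fun i _ => hp.mul_succ_succ hn i
    _ = ∑ i ∈ Ico k (n + 1), f i * p n i
          + ∑ i ∈ Ico (k + 1) (n + 1), ((n : ℝ) - f i) * p n i := by
        rw [sum_add_distrib, sum_Ico_add' (fun i => ((n : ℝ) - f i) * p n i),
          sum_Ico_succ_top hk, hp.eq_zero_of_le hn le_rfl, mul_zero, add_zero]
    _ = f k * p n k + n * ∑ j ∈ Ico (k + 1) (n + 1), p n j := by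
        rw [sum_eq_sum_Ico_succ_bot (by omega), add_assoc, ← sum_add_distrib, mul_sum]
        congr 1
        exact sum_congr rfl fun i _ => by ring

theorem sum_range_eq_one (hp : ChainLaw f p) {n : ℕ} (hn : 1 ≤ n) : ∑ j ∈ range n, p n j = 1 := by
  induction n, hn using Nat.le_induction with
  | base => simp [hp.1]
  | succ m hm ih =>
    have htail := hp.mul_tail_succ hm (Nat.zero_le m)
    rw [← hp.sum_Ico_eq_of_le hm m.le_succ] at htail
    rw [range_eq_Ico, sum_eq_sum_Ico_succ_bot (by omega)] at ih ⊢
    apply mul_left_cancel₀ (by positivity : ((m : ℝ) + 1) ≠ 0)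
    linear_combination hp.mul_succ_zero hm + htail + (m : ℝ) * ih

theorem nonneg (hp : ChainLaw f p) (hf0 : ∀ k, 0 ≤ f k) (hf : ∀ k, f k ≤ (k : ℝ) + 1)
    {n : ℕ} (hn : 1 ≤ n) (j : ℕ) : 0 ≤ p n j := by
  induction n, hn using Nat.le_induction generalizing j with
  | base => rw [hp.1 j]; split_ifs <;> norm_num
  | succ m hm ih =>
    have hm1 : (1 : ℝ) ≤ m := by exact_mod_cast hm
    rw [← mul_nonneg_iff_of_pos_left (by positivity : (0 : ℝ) < m + 1)]
    rcases j with _ | j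
    · have hf00 : f 0 ≤ 1 := by simpa using hf 0
      rw [hp.mul_succ_zero hm]
      nlinarith [ih 0]
    · have hstay : 0 ≤ ((m : ℝ) - f (j + 1)) * p m (j + 1) := by
        rcases lt_or_ge (j + 1) m with hjm | hjm
        · have hfj : f (j + 1) ≤ m := (hf (j + 1)).trans (by exact_mod_cast hjm)
          exact mul_nonneg (by linarith) (ih _)
        · rw [hp.eq_zero_of_le hm hjm, mul_zero]
      rw [hp.mul_succ_succ hm]
      exact add_nonneg (mul_nonneg (hf0 j) (ih j)) hstay

theorem Hk_self (hp : ChainLaw f p) {n : ℕ} (hn : 1 ≤ n) : Hk f p n n = 0 := by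
  simp [Hk, hp.eq_zero_of_le hn le_rfl]

theorem Hk_top_nonneg (hp : ChainLaw f p) (hf0 : ∀ k, 0 ≤ f k) (hf : ∀ k, f k ≤ (k : ℝ) + 1)
    (m : ℕ) : 0 ≤ Hk f p m (m + 1) := by
  simp only [Hk, Ico_self, sum_empty, sub_zero]
  exact mul_nonneg (hf0 m) (hp.nonneg hf0 hf (by omega) m)

theorem Hk_zero_eq (hp : ChainLaw f p) {n : ℕ} (hn : 1 ≤ n) :
    Hk f p 0 n = (f 0 + 1) * p n 0 - 1 := by
  have hmass := hp.sum_range_eq_one hn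
  rw [range_eq_Ico, sum_eq_sum_Ico_succ_bot (by omega)] at hmass
  simp only [Hk, zero_add]
  linarith

theorem mul_Hk_zero_succ (hp : ChainLaw f p) {n : ℕ} (hn : 1 ≤ n) :
    ((n : ℝ) + 1) * Hk f p 0 (n + 1) = ((n : ℝ) - f 0) * Hk f p 0 n := by
  rw [hp.Hk_zero_eq hn, hp.Hk_zero_eq (by omega)]
  linear_combination (f 0 + 1) * hp.mul_succ_zero hn

theorem Hk_zero_nonneg (hp : ChainLaw f p) (hf0 : ∀ k, 0 ≤ f k) (hf : ∀ k, f k ≤ (k : ℝ) + 1)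
    {n : ℕ} (hn : 1 ≤ n) : 0 ≤ Hk f p 0 n := by
  induction n, hn using Nat.le_induction with
  | base => simpa [Hk, hp.1] using hf0 0
  | succ m hm ih =>
    have hm1 : (1 : ℝ) ≤ m := by exact_mod_cast hm
    have hf00 : f 0 ≤ 1 := by simpa using hf 0
    rw [← mul_nonneg_iff_of_pos_left (by positivity : (0 : ℝ) < m + 1), hp.mul_Hk_zero_succ hm]
    exact mul_nonneg (by linarith) ih

theorem mul_Hk_succ_succ (hp : ChainLaw f p) {n k : ℕ} (hn : 1 ≤ n) (hk : k < n) :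
    ((n : ℝ) + 1) * Hk f p (k + 1) (n + 1)
      = f (k + 1) * Hk f p k n + ((n : ℝ) - f (k + 1)) * Hk f p (k + 1) n := by
  have htail := hp.mul_tail_succ hn (k := k + 1) hk
  have hsplit : ∑ j ∈ Ico (k + 1) (n + 1), p n j
      = p n (k + 1) + ∑ j ∈ Ico (k + 1 + 1) (n + 1), p n j :=
    sum_eq_sum_Ico_succ_bot (by omega) _
  simp only [Hk]
  rw [hp.sum_Ico_eq_of_le hn n.le_succ (k + 1), hp.sum_Ico_eq_of_le hn n.le_succ (k + 1 + 1)]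
  linear_combination f (k + 1) * hp.mul_succ_succ hn k - htail + f (k + 1) * hsplit

theorem mul_Hk_one_sub_zero (hp : ChainLaw f p) {n : ℕ} (hn : 1 ≤ n) :
    ((n : ℝ) + 1) * (Hk f p 1 (n + 1) - Hk f p 0 (n + 1))
      = ((n : ℝ) - f 1) * (Hk f p 1 n - Hk f p 0 n) + f 0 * Hk f p 0 n := by
  linear_combination hp.mul_Hk_succ_succ hn hn - hp.mul_Hk_zero_succ hn

theorem mul_Hk_sub_succ (hp : ChainLaw f p) {n k : ℕ} (hn : 1 ≤ n) (hk : k + 1 < n) :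
    ((n : ℝ) + 1) * (Hk f p (k + 1 + 1) (n + 1) - Hk f p (k + 1) (n + 1))
      = ((n : ℝ) - f (k + 1 + 1)) * (Hk f p (k + 1 + 1) n - Hk f p (k + 1) n)
        + f (k + 1) * (Hk f p (k + 1) n - Hk f p k n) := by
  linear_combination hp.mul_Hk_succ_succ hn hk - hp.mul_Hk_succ_succ hn (by omega : k < n)

theorem Hk_sub_nonneg_succ (hp : ChainLaw f p) (hf0 : ∀ k, 0 ≤ f k)
    (hf : ∀ k, f k ≤ (k : ℝ) + 1) {n : ℕ} (hn : 1 ≤ n) (hfn : (n : ℝ) ≤ f n)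
    (ih : ∀ k, k + 2 ≤ n → 0 ≤ Hk f p (k + 1) n - Hk f p k n) {k : ℕ} (hk : k + 2 ≤ n + 1) :
    0 ≤ Hk f p (k + 1) (n + 1) - Hk f p k (n + 1) := by
  have hfirst : 0 ≤ ((n : ℝ) - f (k + 1)) * (Hk f p (k + 1) n - Hk f p k n) := by
    rcases (by omega : k + 2 ≤ n ∨ k + 1 = n) with hint | rfl
    · have hfk : f (k + 1) ≤ n := (hf (k + 1)).trans (by exact_mod_cast hint)
      exact mul_nonneg (by linarith) (ih k hint)
    · rw [hp.Hk_self hn, zero_sub]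
      exact mul_nonneg_of_nonpos_of_nonpos (by linarith)
        (neg_nonpos.mpr (hp.Hk_top_nonneg hf0 hf k))
  rw [← mul_nonneg_iff_of_pos_left (by positivity : (0 : ℝ) < n + 1)]
  rcases k with _ | k
  · rw [hp.mul_Hk_one_sub_zero hn]
    exact add_nonneg hfirst (mul_nonneg (hf0 0) (hp.Hk_zero_nonneg hf0 hf hn))
  · rw [hp.mul_Hk_sub_succ hn (by omega)]
    exact add_nonneg hfirst (mul_nonneg (hf0 _) (ih k (by omega)))

theorem Hk_sub_nonneg (hp : ChainLaw f p) (hf0 : ∀ k, 0 ≤ f k) (hf : ∀ k, f k ≤ (k : ℝ) + 1)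
    {K : ℕ} (hK : ∀ k ≤ K, (k : ℝ) ≤ f k) {n : ℕ} (hn : 1 ≤ n) (hnK : n ≤ K + 1) {k : ℕ}
    (hk : k + 2 ≤ n) : 0 ≤ Hk f p (k + 1) n - Hk f p k n := by
  induction n, hn using Nat.le_induction generalizing k with
  | base => omega
  | succ m hm ih =>
    exact hp.Hk_sub_nonneg_succ hf0 hf hm (hK m (by omega)) (fun j hj => ih (by omega) hj) hk

end ChainLaw

/-- if `k ≤ f k ≤ k+1` for all `k ≤ K`, then for every
`2 ≤ ℓ ≤ K+1` the map `k ↦ h(k,ℓ)` is nondecreasing on `{0, …, ℓ-1}`: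
`h(k+1,ℓ) - h(k,ℓ) ≥ 0` for all `k ≤ ℓ-2`. -/
theorem Hk_monotone (f : ℕ → ℝ) (hfpos : ∀ k, 0 < f k)
    (hfle : ∀ k, f k ≤ (k : ℝ) + 1) (p : ℕ → ℕ → ℝ) (hp : ChainLaw f p)
    (K : ℕ) (hK : ∀ k, k ≤ K → (k : ℝ) ≤ f k ∧ f k ≤ (k : ℝ) + 1) :
    ∀ ℓ, 2 ≤ ℓ → ℓ ≤ K + 1 → ∀ k, k ≤ ℓ - 2 →
      0 ≤ Hk f p (k + 1) ℓ - Hk f p k ℓ := by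
  intro ℓ hℓ hℓK k hk
  exact hp.Hk_sub_nonneg (fun k => (hfpos k).le) hfle (fun k hk => (hK k hk).1) (by omega) hℓK
    (by omega)
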